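/- arXiv:1607.08530 — 7 statements merged into one kernel-verified Lean document; each statement's English description precedes it below -/
import Mathlib

section
/- Let V_max > 0 and let P ∈ (0,1) be fixed. For σ² > 0 set c^A = 2/(σ²P) + 2 and define R_A(u) = (V_max − u)²/((c^A − 2)(c^A − 1)) − V_max^{2−c^A}(V_max − u)^{c^A}/((c^A − 2)(c^A − 1)) − u·V_max^{1−c^A}(V_max − u)^{c^A}/(c^A − 1). Then R_A(V_max·P) → 0 as σ² → 0⁺. -/
/-!
Writing `c = c^A`, the two correction terms of `R_A(u)` carry the factor `(1 - u/V_max)^c`, which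
decays geometrically as `c → ∞` whenever `0 < u ≤ V_max`; the remaining term is `O(1/c²)`.
Since `c^A = 2/(σ²P) + 2 → ∞` as `σ² → 0⁺`, the residual at `u = V_max·P` vanishes in the limit.
-/

open Filter Set Real

open scoped Topology

/-- The closed form of `∫₀ᵘ (u - v) ((V - u)/(V - v))^c dv`. -/
noncomputable def accelerationResidual (V u c : ℝ) : ℝ :=
  (V - u) ^ 2 / ((c - 2) * (c - 1))
    - V ^ (2 - c) * (V - u) ^ c / ((c - 2) * (c - 1))
    - u * V ^ (1 - c) * (V - u) ^ c / (c - 1)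

lemma rpow_sub_mul_rpow_eq {V A : ℝ} (hV : 0 < V) (hA : 0 ≤ A) (k c : ℝ) :
    V ^ (k - c) * A ^ c = V ^ k * (A / V) ^ c := by
  rw [div_rpow hA hV.le, rpow_sub hV]
  field_simp

lemma accelerationResidual_eq {V u : ℝ} (hV : 0 < V) (hu : u ≤ V) (c : ℝ) :
    accelerationResidual V u c =
      (V - u) ^ 2 * ((c - 2) * (c - 1))⁻¹
        - V ^ (2 : ℝ) * (((V - u) / V) ^ c * ((c - 2) * (c - 1))⁻¹)
        - u * V * (((V - u) / V) ^ c * (c - 1)⁻¹) := by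
  have hA : 0 ≤ V - u := sub_nonneg.mpr hu
  have h₁ := rpow_sub_mul_rpow_eq hV hA 1 c
  rw [rpow_one] at h₁
  rw [accelerationResidual, mul_assoc u, h₁, rpow_sub_mul_rpow_eq hV hA]
  ring

theorem tendsto_accelerationResidual_atTop {V u : ℝ} (hV : 0 < V) (hu₀ : 0 < u) (hu : u ≤ V) :
    Tendsto (accelerationResidual V u) atTop (𝓝 0) := by
  have hq : Tendsto (fun c : ℝ => ((V - u) / V) ^ c) atTop (𝓝 0) :=
    tendsto_rpow_atTop_of_base_lt_one _
      (by linarith [div_nonneg (sub_nonneg.mpr hu) hV.le])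
      ((div_lt_one hV).mpr (by linarith))
  have hc₁ : Tendsto (fun c : ℝ => c - 1) atTop atTop := tendsto_atTop_add_const_right _ _ tendsto_id
  have hc₂ : Tendsto (fun c : ℝ => c - 2) atTop atTop := tendsto_atTop_add_const_right _ _ tendsto_id
  have h₁ : Tendsto (fun c : ℝ => (c - 1)⁻¹) atTop (𝓝 0) := hc₁.inv_tendsto_atTop
  have h₂ : Tendsto (fun c : ℝ => ((c - 2) * (c - 1))⁻¹) atTop (𝓝 0) :=
    (hc₂.atTop_mul_atTop₀ hc₁).inv_tendsto_atTop
  have := ((h₂.const_mul ((V - u) ^ 2)).sub ((hq.mul h₂).const_mul (V ^ (2 : ℝ)))).sub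
    ((hq.mul h₁).const_mul (u * V))
  simp only [mul_zero, sub_zero] at this
  exact this.congr fun c => (accelerationResidual_eq hV hu c).symm

lemma tendsto_two_div_mul_add_two_nhdsGT_zero {P : ℝ} (hP : 0 < P) :
    Tendsto (fun s : ℝ => 2 / (s * P) + 2) (𝓝[>] 0) atTop := by
  refine tendsto_atTop_add_const_right _ _ ?_
  refine (tendsto_inv_nhdsGT_zero.const_mul_atTop (div_pos two_pos hP)).congr fun s => ?_
  ring

/-- The acceleration part `R_A` of the equilibrium condition, evaluated at the Greenshields
speed `u = V_max · P`, tends to `0` as the variance `σ² → 0⁺`.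
Here `c^A = 2/(σ²P) + 2`. -/
theorem RA_tendsto_zero (Vmax P : ℝ) (hV : 0 < Vmax) (hP : P ∈ Set.Ioo (0 : ℝ) 1) :
    Tendsto (fun s : ℝ =>
        (Vmax - Vmax * P) ^ 2 / ((2 / (s * P) + 2 - 2) * (2 / (s * P) + 2 - 1))
          - Vmax ^ (2 - (2 / (s * P) + 2)) * (Vmax - Vmax * P) ^ (2 / (s * P) + 2)
              / ((2 / (s * P) + 2 - 2) * (2 / (s * P) + 2 - 1))
          - Vmax * P * Vmax ^ (1 - (2 / (s * P) + 2)) * (Vmax - Vmax * P) ^ (2 / (s * P) + 2)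
              / (2 / (s * P) + 2 - 1))
      (nhdsWithin 0 (Set.Ioi 0)) (nhds 0) :=
  (tendsto_accelerationResidual_atTop hV (mul_pos hV hP.1)
    (mul_le_of_le_one_right hV.le hP.2.le)).comp (tendsto_two_div_mul_add_two_nhdsGT_zero hP.1)
end

section
/- Let V_max > 0 and let P ∈ (0,1) be fixed. For σ² > 0 set c^B = 2/σ² + 2 and define R_B(u) = (u − Pu)²/((c^B − 2)(c^B − 1)) − (u − Pu)^{c^B}(V_max − Pu)^{2−c^B}/((c^B − 2)(c^B − 1)) − (u − Pu)^{c^B}(V_max − u)(V_max − Pu)^{1−c^B}/(c^B − 1). Then R_B(V_max·P) → 0 as σ² → 0⁺. -/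
open Filter Real Topology

/-! With `A = u - P u`, `B = V_max - P u` and `c = c^B`, the two non-polynomial terms of `R_B`
are `(A / B) ^ c` times a bounded rational function of `c`. At `u = V_max P` we have
`0 ≤ A < B`, so `(A / B) ^ c` decays geometrically as `c → ∞`, and the remaining term
`A² / ((c - 2)(c - 1))` tends to `0` as well. -/

lemma tendsto_const_div_add_const_nhdsGT_zero {a : ℝ} (ha : 0 < a) (b : ℝ) :
    Tendsto (fun s : ℝ => a / s + b) (𝓝[>] 0) atTop :=
  tendsto_atTop_add_const_right _ b <|
    (tendsto_inv_nhdsGT_zero.const_mul_atTop ha).congr fun s => (div_eq_mul_inv a s).symm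

lemma tendsto_sub_two_mul_sub_one_atTop :
    Tendsto (fun c : ℝ => (c - 2) * (c - 1)) atTop atTop :=
  (tendsto_atTop_add_const_right _ (-2) tendsto_id).atTop_mul_atTop₀
    (tendsto_atTop_add_const_right _ (-1) tendsto_id)

lemma tendsto_rpow_mul_rpow_sub_atTop {A B : ℝ} (hA : 0 ≤ A) (hAB : A < B) (k : ℝ) :
    Tendsto (fun c : ℝ => A ^ c * B ^ (k - c)) atTop (𝓝 0) := by
  have hB : 0 < B := hA.trans_lt hAB
  have hratio : Tendsto (fun c : ℝ => (A / B) ^ c) atTop (𝓝 0) :=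
    tendsto_rpow_atTop_of_base_lt_one _ (by linarith [div_nonneg hA hB.le])
      ((div_lt_one hB).mpr hAB)
  simpa using (hratio.mul_const (B ^ k)).congr fun c => by
    rw [div_rpow hA hB.le, rpow_sub hB]
    field_simp

lemma tendsto_braking_residual_atTop {A B : ℝ} (hA : 0 ≤ A) (hAB : A < B) (C : ℝ) :
    Tendsto (fun c : ℝ => A ^ 2 / ((c - 2) * (c - 1)) - A ^ c * B ^ (2 - c) / ((c - 2) * (c - 1))
      - A ^ c * C * B ^ (1 - c) / (c - 1)) atTop (𝓝 0) := by
  have hlin : Tendsto (fun c : ℝ => c - 1) atTop atTop :=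
    tendsto_atTop_add_const_right _ (-1) tendsto_id
  have hquad := tendsto_sub_two_mul_sub_one_atTop
  have hpoly := (tendsto_const_nhds (x := A ^ 2)).div_atTop hquad
  have hsecond := (tendsto_rpow_mul_rpow_sub_atTop hA hAB 2).div_atTop hquad
  have hthird := ((tendsto_rpow_mul_rpow_sub_atTop hA hAB 1).mul_const C).div_atTop hlin
  simpa using ((hpoly.sub hsecond).sub hthird).congr fun c => by ring

/-- The braking part `R_B` of the equilibrium condition, evaluated at the Greenshields
speed `u = V_max · P`, tends to `0` as the variance `σ² → 0⁺`.
Here `c^B = 2/σ² + 2`. -/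
theorem RB_tendsto_zero (Vmax P : ℝ) (hV : 0 < Vmax) (hP : P ∈ Set.Ioo (0 : ℝ) 1) :
    Tendsto (fun s : ℝ =>
        (Vmax * P - P * (Vmax * P)) ^ 2 / ((2 / s + 2 - 2) * (2 / s + 2 - 1))
          - (Vmax * P - P * (Vmax * P)) ^ (2 / s + 2)
              * (Vmax - P * (Vmax * P)) ^ (2 - (2 / s + 2))
              / ((2 / s + 2 - 2) * (2 / s + 2 - 1))
          - (Vmax * P - P * (Vmax * P)) ^ (2 / s + 2) * (Vmax - Vmax * P)
              * (Vmax - P * (Vmax * P)) ^ (1 - (2 / s + 2)) / (2 / s + 2 - 1))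
      (nhdsWithin 0 (Set.Ioi 0)) (nhds 0) := by
  obtain ⟨hP0, hP1⟩ := hP
  have hA : 0 ≤ Vmax * P - P * (Vmax * P) := by
    have : Vmax * P - P * (Vmax * P) = Vmax * P * (1 - P) := by ring
    rw [this]
    exact mul_nonneg (mul_pos hV hP0).le (by linarith)
  have hAB : Vmax * P - P * (Vmax * P) < Vmax - P * (Vmax * P) := by nlinarith
  exact (tendsto_braking_residual_atTop hA hAB (Vmax - Vmax * P)).comp
    (tendsto_const_div_add_const_nhdsGT_zero two_pos 2)
end

section
/- Let V > 0, 0 < Δv < V, c > 2 and V − Δv < u < V. Then ∫₀^{V−Δv} (u − v)·((V − u)/Δv)^c·exp((c − 2)(v + Δv − V)/Δv) dv + ∫_{V−Δv}^u (u − v)·((V − u)/(V − v))^c dv = (Δv/(c − 2))·((V − u)/Δv)^c·[u + Δv − V − u·exp(−(c − 2)(V − Δv)/Δv)] + (Δv/(c − 2))²·((V − u)/Δv)^c·[1 − exp(−(c − 2)(V − Δv)/Δv)] + ((V − u)^c/(c − 1))·[(V − u − Δv)·Δv^{1−c} + (V − u)^{2−c}/(c − 2) − Δv^{2−c}/(c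 − 2)]. -/
open Real

/-!
Both integrals have elementary antiderivatives. On `[0, V - Δv]` the density is a constant
times `exp (k (v - (V - Δv)))` with `k = (c - 2) / Δv`, and `(u - v) e^{k v}` integrates by parts.
On `[V - Δv, u]` we split `u - v = (V - v) - (V - u)`, so the integrand is a combination of
the powers `(V - v) ^ (1 - c)` and `(V - v) ^ (-c)`. What remains is algebra in the atoms
`Δv ^ (1 - c)`, `(V - u) ^ (1 - c)` and `exp (-k (V - Δv))`.
-/

theorem integral_sub_mul_exp_mul_sub (a b s u k : ℝ) (hk : k ≠ 0) :
    ∫ x in a..b, (u - x) * exp (k * (x - s))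
      = exp (k * (b - s)) * ((u - b) / k + 1 / k ^ 2)
        - exp (k * (a - s)) * ((u - a) / k + 1 / k ^ 2) := by
  have hderiv : ∀ x : ℝ, HasDerivAt (fun y => exp (k * (y - s)) * ((u - y) / k + 1 / k ^ 2))
      ((u - x) * exp (k * (x - s))) x := by
    intro x
    have hexp := (((hasDerivAt_id' x).sub_const s).const_mul k).exp
    have hlin := (((hasDerivAt_id' x).const_sub u).div_const k).add_const (1 / k ^ 2)
    refine (hexp.mul hlin).congr_deriv ?_
    field_simp
    ring
  exact intervalIntegral.integral_eq_sub_of_hasDerivAt (fun x _ => hderiv x)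
    (Continuous.intervalIntegrable (by fun_prop) _ _)

theorem hasDerivAt_sub_rpow {W x : ℝ} (hx : x ≠ W) (p : ℝ) :
    HasDerivAt (fun y => (W - y) ^ p) (-(p * (W - x) ^ (p - 1))) x := by
  convert ((hasDerivAt_id' x).const_sub W).rpow_const (p := p) (Or.inl (sub_ne_zero.2 hx.symm)) using 1
  ring

theorem integral_sub_mul_sub_rpow_neg {a b W : ℝ} (u c : ℝ) (hab : a ≤ b) (hbW : b < W)
    (hc1 : c ≠ 1) (hc2 : c ≠ 2) :
    ∫ x in a..b, (u - x) * (W - x) ^ (-c)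
      = ((W - b) ^ (2 - c) / (c - 2) - (W - u) * (W - b) ^ (1 - c) / (c - 1))
        - ((W - a) ^ (2 - c) / (c - 2) - (W - u) * (W - a) ^ (1 - c) / (c - 1)) := by
  have hpos : ∀ x ∈ Set.uIcc a b, 0 < W - x := fun x hx => by
    rw [Set.uIcc_of_le hab] at hx
    linarith [hx.2]
  have hc1' : c - 1 ≠ 0 := sub_ne_zero.2 hc1
  have hc2' : c - 2 ≠ 0 := sub_ne_zero.2 hc2
  refine intervalIntegral.integral_eq_sub_of_hasDerivAt (f := fun x =>
    (W - x) ^ (2 - c) / (c - 2) - (W - u) * (W - x) ^ (1 - c) / (c - 1)) (fun x hx => ?_) ?_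
  · have hWx := hpos x hx
    have hxW : x ≠ W := (sub_pos.1 hWx).ne
    refine (((hasDerivAt_sub_rpow hxW (2 - c)).div_const (c - 2)).sub
      (((hasDerivAt_sub_rpow hxW (1 - c)).const_mul (W - u)).div_const (c - 1))).congr_deriv ?_
    rw [show 2 - c - 1 = -c + 1 by ring, show 1 - c - 1 = -c by ring,
      rpow_add_one hWx.ne']
    field_simp
    ring
  · refine ContinuousOn.intervalIntegrable fun x hx => ?_
    have hWx := hpos x hx
    exact ((continuousAt_const.sub continuousAt_id).mul
      ((continuousAt_const.sub continuousAt_id).rpow_const (Or.inl hWx.ne'))).continuousWithinAt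

theorem acceleration_integral_mixed_eval_general (V Δv c u : ℝ) (hΔ0 : 0 < Δv)
    (hc : 2 < c) (hu1 : V - Δv < u) (hu2 : u < V) :
    (∫ v in (0 : ℝ)..(V - Δv),
        (u - v) * ((V - u) / Δv) ^ c * Real.exp ((c - 2) * (v + Δv - V) / Δv))
      + ∫ v in (V - Δv)..u, (u - v) * ((V - u) / (V - v)) ^ c
    = Δv / (c - 2) * ((V - u) / Δv) ^ c
          * (u + Δv - V - u * Real.exp (-(c - 2) * (V - Δv) / Δv))
      + (Δv / (c - 2)) ^ 2 * ((V - u) / Δv) ^ c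
          * (1 - Real.exp (-(c - 2) * (V - Δv) / Δv))
      + (V - u) ^ c / (c - 1)
          * ((V - u - Δv) * Δv ^ (1 - c) + (V - u) ^ (2 - c) / (c - 2)
            - Δv ^ (2 - c) / (c - 2)) := by
  have hc2 : c - 2 ≠ 0 := by linarith
  have hc1 : c - 1 ≠ 0 := by linarith
  have hk : (c - 2) / Δv ≠ 0 := div_ne_zero hc2 hΔ0.ne'
  have hVu : 0 < V - u := by linarith
  have hfirst : (∫ v in (0 : ℝ)..(V - Δv),
        (u - v) * ((V - u) / Δv) ^ c * exp ((c - 2) * (v + Δv - V) / Δv))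
      = ((V - u) / Δv) ^ c * ∫ v in (0 : ℝ)..(V - Δv),
        (u - v) * exp ((c - 2) / Δv * (v - (V - Δv))) := by
    rw [← intervalIntegral.integral_const_mul]
    congr 1 with v
    ring_nf
  have hsecond : (∫ v in (V - Δv)..u, (u - v) * ((V - u) / (V - v)) ^ c)
      = (V - u) ^ c * ∫ v in (V - Δv)..u, (u - v) * (V - v) ^ (-c) := by
    rw [← intervalIntegral.integral_const_mul]
    refine intervalIntegral.integral_congr fun v hv => ?_
    rw [Set.uIcc_of_le hu1.le] at hv
    have hVv : 0 < V - v := by linarith [hv.2]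
    simp only [div_rpow hVu.le hVv.le, rpow_neg hVv.le]
    ring
  have hpow : ∀ x : ℝ, 0 < x → x ^ (2 - c) = x ^ (1 - c) * x := fun x hx => by
    rw [show 2 - c = 1 - c + 1 by ring, rpow_add_one hx.ne']
  rw [hfirst, hsecond, integral_sub_mul_exp_mul_sub _ _ _ _ _ hk,
    integral_sub_mul_sub_rpow_neg u c hu1.le hu2 (by linarith) (by linarith),
    sub_self, mul_zero, exp_zero, sub_sub_cancel,
    show (c - 2) / Δv * (0 - (V - Δv)) = -(c - 2) * (V - Δv) / Δv by ring,
    hpow _ hVu, hpow _ hΔ0]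
  field_simp
  ring

/-- Explicit evaluation of the acceleration integral `R_A(u)` in the regime
`V_max − Δv < u < V_max` for the Fokker-Planck traffic model with desired speed
`V_A = min{v + Δv, V_max}`. -/
theorem acceleration_integral_mixed_eval (V Δv c u : ℝ) (hV : 0 < V) (hΔ0 : 0 < Δv)
    (hΔV : Δv < V) (hc : 2 < c) (hu1 : V - Δv < u) (hu2 : u < V) :
    (∫ v in (0 : ℝ)..(V - Δv),
        (u - v) * ((V - u) / Δv) ^ c * Real.exp ((c - 2) * (v + Δv - V) / Δv))
      + ∫ v in (V - Δv)..u, (u - v) * ((V - u) / (V - v)) ^ c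
    = Δv / (c - 2) * ((V - u) / Δv) ^ c
          * (u + Δv - V - u * Real.exp (-(c - 2) * (V - Δv) / Δv))
      + (Δv / (c - 2)) ^ 2 * ((V - u) / Δv) ^ c
          * (1 - Real.exp (-(c - 2) * (V - Δv) / Δv))
      + (V - u) ^ c / (c - 1)
          * ((V - u - Δv) * Δv ^ (1 - c) + (V - u) ^ (2 - c) / (c - 2)
            - Δv ^ (2 - c) / (c - 2)) :=
  acceleration_integral_mixed_eval_general V Δv c u hΔ0 hc hu1 hu2
end

section
/- Let 0 < u, σ > 0, P ∈ (0,1], K > 0, and let Δ_A : [0,u] → ℝ be continuously differentiable with Δ_A(s) > 0 for all s ∈ [0,u]. Define f(v) = K·(Δ_A(u)/Δ_A(v))²·exp(−(2/σ²)∫_v^u 1/Δ_A(s) ds) for v ∈ (0,u). Then f is differentiable on (0,u) and satisfies f′(v) = (B(v)/D(v))·f(v), where B(v) = P·Δ_A(v) − (σ²/2)·d/dv[P·Δ_A(v)²] and D(v) = (σ²P/2)·Δ_A(v)². -/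
/-!
Writing `f = K (Δ_A(u)/Δ_A)² exp(-(2/σ²) ∫_v^u 1/Δ_A)`, the logarithmic derivative is
`f'/f = -2Δ_A'/Δ_A + 2/(σ² Δ_A)`, by the fundamental theorem of calculus for the integral in
its lower limit. Since `(PΔ_A²)' = 2PΔ_AΔ_A'`, the factor `P` cancels from `B/D` and
`B/D = 2/(σ² Δ_A) - 2Δ_A'/Δ_A` as well.
-/

open Real Set

theorem ContinuousOn.hasDerivAt_integral_left {E : Type*} [NormedAddCommGroup E]
    [NormedSpace ℝ E] [CompleteSpace E] {g : ℝ → E} {a b v : ℝ}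
    (hg : ContinuousOn g (Icc a b)) (hv : v ∈ Ioo a b) :
    HasDerivAt (fun w => ∫ s in w..b, g s) (-g v) v := by
  have hnhds : Icc a b ∈ nhds v := Icc_mem_nhds hv.1 hv.2
  have hsub : uIcc v b ⊆ Icc a b := by
    rw [uIcc_of_le hv.2.le]
    exact Icc_subset_Icc_left hv.1.le
  exact intervalIntegral.integral_hasDerivAt_left ((hg.mono hsub).intervalIntegrable)
    ⟨Icc a b, hnhds, hg.aestronglyMeasurable measurableSet_Icc⟩ (hg.continuousAt hnhds)

noncomputable def accelerationDensity (σ K u : ℝ) (Δ : ℝ → ℝ) (w : ℝ) : ℝ :=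
  K * (Δ u / Δ w) ^ 2 * exp (-(2 / σ ^ 2) * ∫ s in w..u, 1 / Δ s)

section

variable {σ K u d v : ℝ} {Δ : ℝ → ℝ}

theorem hasDerivAt_accelerationDensity (hΔ : HasDerivAt Δ d v) (hΔv : Δ v ≠ 0)
    (hI : HasDerivAt (fun w => ∫ s in w..u, 1 / Δ s) (-(1 / Δ v)) v) :
    HasDerivAt (accelerationDensity σ K u Δ)
      ((2 / (σ ^ 2 * Δ v) - 2 * d / Δ v) * accelerationDensity σ K u Δ v) v := by
  have hratio : HasDerivAt (fun w => K * (Δ u / Δ w) ^ 2)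
      (K * (2 * (Δ u / Δ v) * ((0 * Δ v - Δ u * d) / Δ v ^ 2))) v := by
    simpa using (((hasDerivAt_const v (Δ u)).fun_div hΔ hΔv).fun_pow 2).const_mul K
  have hexp := (hI.const_mul (-(2 / σ ^ 2))).exp
  refine (hratio.mul hexp).congr_deriv ?_
  unfold accelerationDensity
  field_simp
  ring

theorem drift_div_diffusion_eq {P : ℝ} (hΔ : HasDerivAt Δ d v) (hΔv : Δ v ≠ 0)
    (hσ : σ ≠ 0) (hP : P ≠ 0) :
    (P * Δ v - σ ^ 2 / 2 * deriv (fun w => P * Δ w ^ 2) v) / (σ ^ 2 * P / 2 * Δ v ^ 2)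
      = 2 / (σ ^ 2 * Δ v) - 2 * d / Δ v := by
  have hsq : HasDerivAt (fun w => P * Δ w ^ 2) (P * (2 * Δ v * d)) v := by
    simpa using (hΔ.fun_pow 2).const_mul P
  rw [hsq.deriv]
  field_simp

end

theorem stationary_solution_acceleration_branch_general (u σ P K : ℝ) (hσ : 0 < σ)
    (hP : P ∈ Set.Ioc (0 : ℝ) 1)
    (ΔA : ℝ → ℝ) (hΔA : ContDiffOn ℝ 1 ΔA (Set.Icc 0 u))
    (hΔApos : ∀ s ∈ Set.Icc (0 : ℝ) u, 0 < ΔA s) :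
    ∀ v ∈ Set.Ioo (0 : ℝ) u,
      HasDerivAt
        (fun w => K * (ΔA u / ΔA w) ^ 2 * Real.exp (-(2 / σ ^ 2) * ∫ s in w..u, 1 / ΔA s))
        ((P * ΔA v - σ ^ 2 / 2 * deriv (fun w => P * ΔA w ^ 2) v)
            / (σ ^ 2 * P / 2 * ΔA v ^ 2)
          * (K * (ΔA u / ΔA v) ^ 2 * Real.exp (-(2 / σ ^ 2) * ∫ s in v..u, 1 / ΔA s)))
        v := by
  intro v hv
  have hΔAv : ΔA v ≠ 0 := (hΔApos v (Ioo_subset_Icc_self hv)).ne'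
  have hΔ : HasDerivAt ΔA (deriv ΔA v) v :=
    ((hΔA.contDiffAt (Icc_mem_nhds hv.1 hv.2)).differentiableAt one_ne_zero).hasDerivAt
  have hinv : ContinuousOn (fun s => 1 / ΔA s) (Icc 0 u) :=
    continuousOn_const.div hΔA.continuousOn fun s hs => (hΔApos s hs).ne'
  have hI : HasDerivAt (fun w => ∫ s in w..u, 1 / ΔA s) (-(1 / ΔA v)) v :=
    hinv.hasDerivAt_integral_left hv
  rw [drift_div_diffusion_eq hΔ hΔAv hσ.ne' hP.1.ne']
  exact hasDerivAt_accelerationDensity hΔ hΔAv hI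

/-- The acceleration branch `v < u` of the one-parameter family of stationary distributions
of the Fokker-Planck traffic model solves the stationary ODE `f′(v) = (B(v)/D(v)) f(v)`,
where `B = PΔ_A − (σ²/2)(P Δ_A²)′` and `D = (σ²P/2) Δ_A²`. -/
theorem stationary_solution_acceleration_branch (u σ P K : ℝ) (hu : 0 < u) (hσ : 0 < σ)
    (hP : P ∈ Set.Ioc (0 : ℝ) 1) (hK : 0 < K)
    (ΔA : ℝ → ℝ) (hΔA : ContDiffOn ℝ 1 ΔA (Set.Icc 0 u))
    (hΔApos : ∀ s ∈ Set.Icc (0 : ℝ) u, 0 < ΔA s) :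
    ∀ v ∈ Set.Ioo (0 : ℝ) u,
      HasDerivAt
        (fun w => K * (ΔA u / ΔA w) ^ 2 * Real.exp (-(2 / σ ^ 2) * ∫ s in w..u, 1 / ΔA s))
        ((P * ΔA v - σ ^ 2 / 2 * deriv (fun w => P * ΔA w ^ 2) v)
            / (σ ^ 2 * P / 2 * ΔA v ^ 2)
          * (K * (ΔA u / ΔA v) ^ 2 * Real.exp (-(2 / σ ^ 2) * ∫ s in v..u, 1 / ΔA s)))
        v :=
  stationary_solution_acceleration_branch_general u σ P K hσ hP ΔA hΔA hΔApos
end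

section
/- Let V_max > 0, u ∈ (0,V_max], P ∈ (0,1], σ ≥ 0. Let η be a compactly supported Borel probability measure on ℝ with ∫ ξ dη(ξ) = 0 and ∫ ξ² dη(ξ) = σ². Let Δ_A : [0,u] → ℝ be continuous, let f : [0,u] → ℝ be nonnegative and integrable, and let φ : ℝ → ℝ be twice continuously differentiable with φ″ Lipschitz continuous. For ε ∈ (0,1) and (v*, ξ) ∈ [0,u] × ℝ set v_ε(v*, ξ) = v* + √(εP)·Δ_A(v*)·(√(εP) + ξ). Then lim_{ε→0⁺} (1/ε)·∫_ℝ ∫₀ᵘ (φ(v_ε(v*, ξ)) − φ(v*))·f(v*) dv* dη(ξ) = P·∫₀ᵘ Δ_A(v*)·φ′(v*)·f(v*) dv* + (σ²P/2)·∫₀ᵘ Δ_A(v*)²·φ″(v*)·f(v*) dv*. -/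
open MeasureTheory Filter Real
open Set Function Topology

/-! With `c = √(εP) (√(εP) + ξ)`, a second-order Taylor expansion of `φ` (the Lipschitz bound on
`φ''` controls the remainder) gives, uniformly in `c`,
`∫ (φ (v + c Δ_A v) - φ v) f v dv = c A + c² / 2 B + O(|c|³)` with `A = ∫ Δ_A φ' f` and
`B = ∫ Δ_A² φ'' f`. Integrating in `ξ`, zero mean and variance `σ²` give `∫ c dη = εP` and
`∫ c² dη = εP (εP + σ²)`, while the bounded support of `η` makes the cubic remainder
`O(ε^{3/2})`. After division by `ε` only `P A + σ² P / 2 B` survives as `ε → 0`. -/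

theorem abs_sub_le_mul_abs_of_hasDerivAt {ψ ψ' : ℝ → ℝ} {h C : ℝ}
    (hψ : ∀ t, HasDerivAt ψ (ψ' t) t) (hC : ∀ t ∈ uIcc 0 h, |ψ' t| ≤ C) :
    |ψ h - ψ 0| ≤ C * |h| := by
  simpa using (convex_uIcc (0 : ℝ) h).norm_image_sub_le_of_norm_hasDerivWithin_le
    (fun t _ => (hψ t).hasDerivWithinAt) hC left_mem_uIcc right_mem_uIcc

theorem abs_taylor_two_remainder_le {φ φ' φ'' : ℝ → ℝ} {L : NNReal}
    (hφ' : ∀ x, HasDerivAt φ (φ' x) x) (hφ'' : ∀ x, HasDerivAt φ' (φ'' x) x)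
    (hL : LipschitzWith L φ'') (x h : ℝ) :
    |φ (x + h) - φ x - φ' x * h - φ'' x * h ^ 2 / 2| ≤ L * |h| ^ 3 := by
  have hχ : ∀ t, HasDerivAt (fun t => φ' (x + t) - φ'' x * t) (φ'' (x + t) - φ'' x) t :=
    fun t => ((hφ'' (x + t)).comp_const_add x t).sub ((hasDerivAt_id t).const_mul _)
      |>.congr_deriv (by simp)
  have hψ : ∀ t, HasDerivAt (fun t => φ (x + t) - φ x - φ' x * t - φ'' x * t ^ 2 / 2)
      (φ' (x + t) - φ'' x * t - φ' x) t := fun t =>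
    ((((hφ' (x + t)).comp_const_add x t).sub_const (φ x)).sub ((hasDerivAt_id t).const_mul _)).sub
      (((hasDerivAt_pow 2 t).const_mul _).div_const 2) |>.congr_deriv (by simp; ring)
  have hχ_le : ∀ t ∈ uIcc 0 h, |φ' (x + t) - φ'' x * t - φ' x| ≤ L * |h| * |h| := by
    intro t ht
    have hlip : ∀ r ∈ uIcc 0 t, |φ'' (x + r) - φ'' x| ≤ L * |h| := fun r hr =>
      calc |φ'' (x + r) - φ'' x| ≤ L * |r| := by
            simpa [Real.dist_eq] using hL.dist_le_mul (x + r) x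
        _ ≤ L * |h| := mul_le_mul_of_nonneg_left
            (by simpa using abs_sub_left_of_mem_uIcc (uIcc_subset_uIcc left_mem_uIcc ht hr)) L.2
    have hth : |t| ≤ |h| := by simpa using abs_sub_left_of_mem_uIcc ht
    calc |φ' (x + t) - φ'' x * t - φ' x| ≤ L * |h| * |t| := by
          simpa using abs_sub_le_mul_abs_of_hasDerivAt hχ hlip
      _ ≤ L * |h| * |h| := by gcongr
  calc |φ (x + h) - φ x - φ' x * h - φ'' x * h ^ 2 / 2| ≤ L * |h| * |h| * |h| := by
        simpa using abs_sub_le_mul_abs_of_hasDerivAt hψ hχ_le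
    _ = L * |h| ^ 3 := by ring

theorem continuous_intervalIntegral_mul_of_continuousOn {X : Type*} [TopologicalSpace X]
    [LocallyCompactSpace X] [FirstCountableTopology X] {F : X → ℝ → ℝ} {f : ℝ → ℝ} {a b : ℝ}
    (hF : ContinuousOn (uncurry F) (univ ×ˢ uIcc a b)) (hf : IntervalIntegrable f volume a b) :
    Continuous fun x => ∫ t in a..b, F x t * f t := by
  refine continuous_iff_continuousAt.2 fun x₀ => ?_
  obtain ⟨K, hK, hKx₀⟩ := exists_compact_mem_nhds x₀
  obtain ⟨M, hM⟩ := (hK.prod isCompact_uIcc).exists_bound_of_continuousOn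
    (hF.mono (prod_mono (subset_univ K) le_rfl))
  refine intervalIntegral.continuousAt_of_dominated_interval (bound := fun t => M * ‖f t‖)
    (Eventually.of_forall fun x => ?_) ?_ (hf.norm.const_mul M)
    (Eventually.of_forall fun t ht => ?_)
  · have hFx : ContinuousOn (F x) (uIcc a b) :=
      hF.comp (Continuous.prodMk_right x).continuousOn fun t ht => ⟨trivial, ht⟩
    exact ((hFx.mono uIoc_subset_uIcc).aestronglyMeasurable measurableSet_uIoc).mul
      hf.def'.aestronglyMeasurable
  · filter_upwards [hKx₀] with x hx
    refine Eventually.of_forall fun t ht => ?_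
    rw [norm_mul]
    exact mul_le_mul_of_nonneg_right (hM (x, t) ⟨hx, uIoc_subset_uIcc ht⟩) (norm_nonneg _)
  · have hFt : Continuous fun x => F x t :=
      hF.comp_continuous (Continuous.prodMk_left t) fun x => ⟨trivial, uIoc_subset_uIcc ht⟩
    exact hFt.continuousAt.mul continuousAt_const

theorem abs_intervalIntegral_taylor_two_remainder_le {φ φ' φ'' g f : ℝ → ℝ} {L : NNReal}
    {a b M : ℝ} (hab : a ≤ b) (hφ' : ∀ x, HasDerivAt φ (φ' x) x)
    (hφ'' : ∀ x, HasDerivAt φ' (φ'' x) x) (hL : LipschitzWith L φ'')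
    (hg : ContinuousOn g (Icc a b)) (hM : ∀ v ∈ Icc a b, |g v| ≤ M)
    (hf : IntervalIntegrable f volume a b) (c : ℝ) :
    |(∫ v in a..b, (φ (v + c * g v) - φ v) * f v)
        - (c * (∫ v in a..b, g v * φ' v * f v) + c ^ 2 / 2 * ∫ v in a..b, g v ^ 2 * φ'' v * f v)|
      ≤ L * M ^ 3 * (∫ v in a..b, |f v|) * |c| ^ 3 := by
  have hφc : Continuous φ := continuous_iff_continuousAt.2 fun x => (hφ' x).continuousAt
  have hφ'c : Continuous φ' := continuous_iff_continuousAt.2 fun x => (hφ'' x).continuousAt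
  rw [← uIcc_of_le hab] at hg
  have i0 : IntervalIntegrable (fun v => (φ (v + c * g v) - φ v) * f v) volume a b :=
    hf.continuousOn_mul ((hφc.comp_continuousOn
      (continuousOn_id.add (continuousOn_const.mul hg))).sub hφc.continuousOn)
  have i1 : IntervalIntegrable (fun v => g v * φ' v * f v) volume a b :=
    hf.continuousOn_mul (hg.mul hφ'c.continuousOn)
  have i2 : IntervalIntegrable (fun v => g v ^ 2 * φ'' v * f v) volume a b :=
    hf.continuousOn_mul ((hg.pow 2).mul hL.continuous.continuousOn)
  rw [← intervalIntegral.integral_const_mul, ← intervalIntegral.integral_const_mul,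
    ← intervalIntegral.integral_add (i1.const_mul c) (i2.const_mul _),
    ← intervalIntegral.integral_sub i0 ((i1.const_mul c).add (i2.const_mul _)),
    ← Real.norm_eq_abs, mul_right_comm _ (∫ v in a..b, |f v|),
    ← intervalIntegral.integral_const_mul]
  refine intervalIntegral.norm_integral_le_of_norm_le hab (Eventually.of_forall fun v hv => ?_)
    (hf.abs.const_mul _)
  have hgv : |c * g v| ≤ |c| * M := by
    rw [abs_mul]; exact mul_le_mul_of_nonneg_left (hM v (Ioc_subset_Icc_self hv)) (abs_nonneg c)
  calc ‖(φ (v + c * g v) - φ v) * f v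
          - (c * (g v * φ' v * f v) + c ^ 2 / 2 * (g v ^ 2 * φ'' v * f v))‖
      = |φ (v + c * g v) - φ v - φ' v * (c * g v) - φ'' v * (c * g v) ^ 2 / 2| * |f v| := by
        rw [Real.norm_eq_abs, ← abs_mul]; ring_nf
    _ ≤ L * (|c| * M) ^ 3 * |f v| := by
        gcongr
        exact (abs_taylor_two_remainder_le hφ' hφ'' hL v (c * g v)).trans (by gcongr)
    _ = L * M ^ 3 * |c| ^ 3 * |f v| := by ring

theorem Continuous.integrable_of_ae_abs_le {E : Type*} [NormedAddCommGroup E] {η : Measure ℝ}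
    [IsFiniteMeasure η] {C : ℝ} (hC : ∀ᵐ ξ ∂η, |ξ| ≤ C) {g : ℝ → E} (hg : Continuous g) :
    Integrable g η := by
  obtain ⟨M, hM⟩ := (isCompact_Icc (a := -C) (b := C)).exists_bound_of_continuousOn
    hg.continuousOn
  exact Integrable.of_bound hg.aestronglyMeasurable M (hC.mono fun ξ hξ => hM ξ (abs_le.1 hξ))

section BoundedNoise

variable {η : Measure ℝ} [IsProbabilityMeasure η] {C σ : ℝ}

theorem integral_quadratic_of_moments (hC : ∀ᵐ ξ ∂η, |ξ| ≤ C) (hmean : ∫ ξ, ξ ∂η = 0)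
    (hvar : ∫ ξ, ξ ^ 2 ∂η = σ ^ 2) (a b c : ℝ) :
    ∫ ξ, (a + b * ξ + c * ξ ^ 2) ∂η = a + c * σ ^ 2 := by
  have h1 : Integrable (fun ξ => ξ) η := continuous_id.integrable_of_ae_abs_le hC
  have h2 : Integrable (fun ξ => ξ ^ 2) η := (continuous_pow 2).integrable_of_ae_abs_le hC
  rw [integral_add (f := fun ξ => a + b * ξ) ((integrable_const a).add (h1.const_mul b))
      (h2.const_mul c),
    integral_add (integrable_const a) (h1.const_mul b), integral_const, integral_const_mul,
    integral_const_mul, hmean, hvar]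
  simp

theorem abs_integral_sub_quadratic_le (hC : ∀ᵐ ξ ∂η, |ξ| ≤ C) (hmean : ∫ ξ, ξ ∂η = 0)
    (hvar : ∫ ξ, ξ ^ 2 ∂η = σ ^ 2) {J : ℝ → ℝ} (hJ : Continuous J) {A B K : ℝ}
    (hR : ∀ c, |J c - (c * A + c ^ 2 / 2 * B)| ≤ K * |c| ^ 3) {s : ℝ} (hs : 0 ≤ s) :
    |∫ ξ, J (s * (s + ξ)) ∂η - (s ^ 2 * A + s ^ 2 * (s ^ 2 + σ ^ 2) / 2 * B)|
      ≤ K * (s * (s + C)) ^ 3 := by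
  have hK : 0 ≤ K := by simpa using (abs_nonneg _).trans (hR 1)
  have hquad : ∫ ξ, (s * (s + ξ) * A + (s * (s + ξ)) ^ 2 / 2 * B) ∂η
      = s ^ 2 * A + s ^ 2 * (s ^ 2 + σ ^ 2) / 2 * B := by
    convert integral_quadratic_of_moments hC hmean hvar (s ^ 2 * A + s ^ 4 / 2 * B)
      (s * A + s ^ 3 * B) (s ^ 2 / 2 * B) using 1
    · congr 1; ext ξ; ring
    · ring
  rw [← hquad, ← integral_sub (f := fun ξ => J (s * (s + ξ)))
    ((hJ.comp (by fun_prop)).integrable_of_ae_abs_le hC)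
    ((by fun_prop : Continuous _).integrable_of_ae_abs_le hC)]
  simpa using norm_integral_le_of_norm_le_const (hC.mono fun ξ hξ =>
    calc ‖J (s * (s + ξ)) - (s * (s + ξ) * A + (s * (s + ξ)) ^ 2 / 2 * B)‖
        ≤ K * |s * (s + ξ)| ^ 3 := hR _
      _ ≤ K * (s * (s + C)) ^ 3 := by
        gcongr
        rw [abs_mul, abs_of_nonneg hs]
        gcongr
        exact (abs_add_le s ξ).trans (by rw [abs_of_nonneg hs]; linarith))

theorem tendsto_one_div_mul_integral_of_quadratic_approx (hC : ∀ᵐ ξ ∂η, |ξ| ≤ C)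
    (hmean : ∫ ξ, ξ ∂η = 0) (hvar : ∫ ξ, ξ ^ 2 ∂η = σ ^ 2)
    {J : ℝ → ℝ} (hJ : Continuous J) {A B K : ℝ}
    (hR : ∀ c, |J c - (c * A + c ^ 2 / 2 * B)| ≤ K * |c| ^ 3) {P : ℝ} (hP : 0 ≤ P) :
    Tendsto (fun ε => 1 / ε * ∫ ξ, J (√(ε * P) * (√(ε * P) + ξ)) ∂η)
      (𝓝[>] 0) (𝓝 (P * A + σ ^ 2 * P / 2 * B)) := by
  have hmain : Tendsto (fun ε => P * A + P * (ε * P + σ ^ 2) / 2 * B) (𝓝[>] 0)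
      (𝓝 (P * A + σ ^ 2 * P / 2 * B)) :=
    tendsto_nhdsWithin_of_tendsto_nhds <| (Continuous.tendsto' (by fun_prop) _ _ (by ring))
  have herr : Tendsto (fun ε => K * P * √(ε * P) * (√(ε * P) + C) ^ 3) (𝓝[>] 0) (𝓝 0) :=
    tendsto_nhdsWithin_of_tendsto_nhds <| (Continuous.tendsto' (by fun_prop) _ _ (by simp))
  refine tendsto_of_tendsto_of_dist hmain (squeeze_zero' (Eventually.of_forall fun _ => dist_nonneg)
    ?_ herr)
  filter_upwards [self_mem_nhdsWithin] with ε (hε : 0 < ε)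
  set s := √(ε * P)
  have hs2 : s ^ 2 = ε * P := sq_sqrt (by positivity)
  have h := abs_integral_sub_quadratic_le hC hmean hvar hJ hR (sqrt_nonneg (ε * P))
  rw [hs2] at h
  calc dist (P * A + P * (ε * P + σ ^ 2) / 2 * B) (1 / ε * ∫ ξ, J (s * (s + ξ)) ∂η)
      = |∫ ξ, J (s * (s + ξ)) ∂η - (ε * P * A + ε * P * (ε * P + σ ^ 2) / 2 * B)| / ε := by
        rw [dist_comm, Real.dist_eq, ← abs_of_pos hε, ← abs_div, abs_of_pos hε]
        congr 1
        field_simp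
    _ ≤ K * (s * (s + C)) ^ 3 / ε := by gcongr
    _ = K * P * s * (s + C) ^ 3 := by
        rw [show (s * (s + C)) ^ 3 = s ^ 2 * (s * (s + C) ^ 3) by ring, hs2]
        field_simp

end BoundedNoise

theorem grazing_limit_acceleration_general (Vmax u P σ : ℝ)
    (hu : u ∈ Set.Ioc (0 : ℝ) Vmax) (hP : P ∈ Set.Ioc (0 : ℝ) 1)
    (η : Measure ℝ) [IsProbabilityMeasure η]
    (hsupp : ∃ C : ℝ, ∀ᵐ ξ ∂η, |ξ| ≤ C)
    (hmean : ∫ ξ, ξ ∂η = 0) (hvar : ∫ ξ, ξ ^ 2 ∂η = σ ^ 2)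
    (ΔA : ℝ → ℝ) (hΔA : ContinuousOn ΔA (Set.Icc 0 u))
    (f : ℝ → ℝ)
    (hf_int : IntervalIntegrable f volume 0 u)
    (φ φ' φ'' : ℝ → ℝ) (hφ' : ∀ x, HasDerivAt φ (φ' x) x)
    (hφ'' : ∀ x, HasDerivAt φ' (φ'' x) x)
    (hφ''lip : ∃ L : NNReal, LipschitzWith L φ'') :
    Tendsto (fun ε : ℝ =>
        1 / ε * ∫ ξ, (∫ v in (0 : ℝ)..u,
          (φ (v + Real.sqrt (ε * P) * ΔA v * (Real.sqrt (ε * P) + ξ)) - φ v) * f v) ∂η)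
      (nhdsWithin 0 (Set.Ioi 0))
      (nhds (P * (∫ v in (0 : ℝ)..u, ΔA v * φ' v * f v)
        + σ ^ 2 * P / 2 * ∫ v in (0 : ℝ)..u, ΔA v ^ 2 * φ'' v * f v)) := by
  obtain ⟨L, hL⟩ := hφ''lip
  obtain ⟨C, hC⟩ := hsupp
  obtain ⟨M, hM⟩ := isCompact_Icc.exists_bound_of_continuousOn hΔA
  have hφc : Continuous φ := continuous_iff_continuousAt.2 fun x => (hφ' x).continuousAt
  have hJ : Continuous fun c => ∫ v in (0 : ℝ)..u, (φ (v + c * ΔA v) - φ v) * f v := by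
    refine continuous_intervalIntegral_mul_of_continuousOn ?_ hf_int
    rw [uIcc_of_le hu.1.le]
    exact (hφc.comp_continuousOn (continuous_snd.continuousOn.add (continuous_fst.continuousOn.mul
      (hΔA.comp continuous_snd.continuousOn fun p hp => hp.2)))).sub
      (hφc.comp continuous_snd).continuousOn
  refine (tendsto_one_div_mul_integral_of_quadratic_approx hC hmean hvar hJ
    (abs_intervalIntegral_taylor_two_remainder_le hu.1.le hφ' hφ'' hL hΔA hM hf_int) hP.1.le).congr
    fun ε => ?_
  simp only [mul_right_comm _ (ΔA _)]

/-- Grazing collision limit of the acceleration part of the Boltzmann-type traffic model: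
as `ε → 0⁺`, the rescaled collision kernel converges to the drift–diffusion terms
`P ∫ Δ_A φ′ f + (σ²P/2) ∫ Δ_A² φ″ f` of the Fokker-Planck model. -/
theorem grazing_limit_acceleration (Vmax u P σ : ℝ) (hV : 0 < Vmax)
    (hu : u ∈ Set.Ioc (0 : ℝ) Vmax) (hP : P ∈ Set.Ioc (0 : ℝ) 1) (hσ : 0 ≤ σ)
    (η : Measure ℝ) [IsProbabilityMeasure η]
    (hsupp : ∃ C : ℝ, ∀ᵐ ξ ∂η, |ξ| ≤ C)
    (hmean : ∫ ξ, ξ ∂η = 0) (hvar : ∫ ξ, ξ ^ 2 ∂η = σ ^ 2)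
    (ΔA : ℝ → ℝ) (hΔA : ContinuousOn ΔA (Set.Icc 0 u))
    (f : ℝ → ℝ) (hf_nonneg : ∀ v ∈ Set.Icc (0 : ℝ) u, 0 ≤ f v)
    (hf_int : IntervalIntegrable f volume 0 u)
    (φ φ' φ'' : ℝ → ℝ) (hφ' : ∀ x, HasDerivAt φ (φ' x) x)
    (hφ'' : ∀ x, HasDerivAt φ' (φ'' x) x) (hφ''cont : Continuous φ'')
    (hφ''lip : ∃ L : NNReal, LipschitzWith L φ'') :
    Tendsto (fun ε : ℝ =>
        1 / ε * ∫ ξ, (∫ v in (0 : ℝ)..u,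
          (φ (v + Real.sqrt (ε * P) * ΔA v * (Real.sqrt (ε * P) + ξ)) - φ v) * f v) ∂η)
      (nhdsWithin 0 (Set.Ioi 0))
      (nhds (P * (∫ v in (0 : ℝ)..u, ΔA v * φ' v * f v)
        + σ ^ 2 * P / 2 * ∫ v in (0 : ℝ)..u, ΔA v ^ 2 * φ'' v * f v)) :=
  grazing_limit_acceleration_general Vmax u P σ hu hP η hsupp hmean hvar ΔA hΔA f hf_int φ φ' φ''
    hφ' hφ'' hφ''lip
end

section
/- Let V_max > 0, u ∈ [0,V_max), P ∈ [0,1), σ ≥ 0. Let η be a compactly supported Borel probability measure on ℝ with ∫ ξ dη(ξ) = 0 and ∫ ξ² dη(ξ) = σ². Let Δ_B : [u,V_max] → ℝ be continuous, let f : [u,V_max] → ℝ be nonnegative and integrable, and let φ : ℝ → ℝ be twice continuously differentiable with φ″ Lipschitz continuous. For ε ∈ (0,1) and (v*, ξ) ∈ [u,V_max] × ℝ set v_ε(v*, ξ) = v* − √(ε(1 − P))·Δ_B(v*)·(√(ε(1 − P)) + ξ). Then lim_{ε→0⁺} (1/ε)·∫_ℝ ∫ᵤ^{V_max} (φ(v_ε(v*,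 ξ)) − φ(v*))·f(v*) dv* dη(ξ) = −(1 − P)·∫ᵤ^{V_max} Δ_B(v*)·φ′(v*)·f(v*) dv* + (σ²(1 − P)/2)·∫ᵤ^{V_max} Δ_B(v*)²·φ″(v*)·f(v*) dv*. -/
open MeasureTheory Filter Real

/-!
Write `h = √(ε(1 - P))`, so that the speed jump is `a = h (h + ξ) Δ_B(v*)`. A second-order
Taylor expansion with Lipschitz `φ″` gives
`φ(v* - a) - φ(v*) = -a φ′(v*) + a² φ″(v*) / 2 + O(|a|³)` uniformly in `v*`, so for bounded `ξ`
the inner integral is a quadratic polynomial in `ξ` up to `O(h³)`. Integrating it against `η`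
only sees the mean `0` and the second moment `σ²` of `η`, which gives
`-h² A + h² (h² + σ²) B / 2 + O(h³)`, where `A` and `B` are the drift and diffusion integrals.
As `h² = ε(1 - P)`, dividing by `ε` leaves the limit plus errors of order `ε` and `√ε`.
-/

section Taylor

variable {g g' g'' : ℝ → ℝ} {L : NNReal}

lemma abs_sub_le_of_hasDerivAt_of_abs_le (hg : ∀ x, HasDerivAt g (g' x) x) {t M : ℝ}
    (hM : ∀ s ∈ Set.uIcc 0 t, |g' s| ≤ M) : |g t - g 0| ≤ M * |t| := by
  simpa using (convex_uIcc (0 : ℝ) t).norm_image_sub_le_of_norm_hasDerivWithin_le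
    (fun x _ => (hg x).hasDerivWithinAt) hM Set.left_mem_uIcc Set.right_mem_uIcc

lemma abs_taylor_remainder_one_le (hg : ∀ x, HasDerivAt g (g' x) x) (hlip : LipschitzWith L g')
    (x t : ℝ) : |g (x - t) - g x + t * g' x| ≤ L * t ^ 2 := by
  have hderiv : ∀ s, HasDerivAt (fun s => g (x - s) - g x + s * g' x) (g' x - g' (x - s)) s :=
    fun s => (((hg (x - s)).comp s ((hasDerivAt_id s).const_sub x)).sub_const (g x)).add
      ((hasDerivAt_id s).mul_const (g' x)) |>.congr_deriv (by simp; ring)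
  have hbound : ∀ s ∈ Set.uIcc 0 t, |g' x - g' (x - s)| ≤ L * |t| := by
    intro s hs
    calc |g' x - g' (x - s)| ≤ L * |x - (x - s)| := by
          simpa [Real.dist_eq] using hlip.dist_le_mul x (x - s)
      _ ≤ L * |t| := by
          rw [sub_sub_cancel]
          exact mul_le_mul_of_nonneg_left (by simpa using Set.abs_sub_left_of_mem_uIcc hs) L.2
  simpa [sq, mul_assoc] using abs_sub_le_of_hasDerivAt_of_abs_le hderiv hbound

lemma abs_taylor_remainder_two_le (hg : ∀ x, HasDerivAt g (g' x) x)
    (hg' : ∀ x, HasDerivAt g' (g'' x) x) (hlip : LipschitzWith L g'') (x t : ℝ) :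
    |g (x - t) - g x + t * g' x - t ^ 2 / 2 * g'' x| ≤ L * |t| ^ 3 := by
  have hderiv : ∀ s, HasDerivAt (fun s => g (x - s) - g x + s * g' x - s ^ 2 / 2 * g'' x)
      (-(g' (x - s) - g' x + s * g'' x)) s :=
    fun s => ((((hg (x - s)).comp s ((hasDerivAt_id s).const_sub x)).sub_const (g x)).add
      ((hasDerivAt_id s).mul_const (g' x))).sub
      (((hasDerivAt_pow 2 s).div_const 2).mul_const (g'' x)) |>.congr_deriv (by simp; ring)
  have hbound : ∀ s ∈ Set.uIcc 0 t, |-(g' (x - s) - g' x + s * g'' x)| ≤ L * |t| ^ 2 := by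
    intro s hs
    have hst : |s| ≤ |t| := by simpa using Set.abs_sub_left_of_mem_uIcc hs
    rw [abs_neg]
    exact (abs_taylor_remainder_one_le hg' hlip x s).trans (by rw [← sq_abs s]; gcongr)
  simpa [pow_succ, mul_assoc] using abs_sub_le_of_hasDerivAt_of_abs_le hderiv hbound

end Taylor

section Moments

variable {η : Measure ℝ} {C : ℝ}

lemma integrable_pow_of_ae_abs_le [IsFiniteMeasure η] (hC : ∀ᵐ ξ ∂η, |ξ| ≤ C) (n : ℕ) :
    Integrable (fun ξ => ξ ^ n) η :=
  .of_bound (by fun_prop) (C ^ n) <| hC.mono fun ξ hξ => by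
    simpa [abs_pow] using pow_le_pow_left₀ (abs_nonneg ξ) hξ n

lemma abs_integral_sub_quadratic_le_s16 [IsProbabilityMeasure η] {s : ℝ}
    (h₁ : Integrable (fun ξ => ξ) η) (h₂ : Integrable (fun ξ => ξ ^ 2) η)
    (hmean : ∫ ξ, ξ ∂η = 0) (hvar : ∫ ξ, ξ ^ 2 ∂η = s)
    {g : ℝ → ℝ} (hg : AEStronglyMeasurable g η) {a b c δ : ℝ}
    (hδ : ∀ᵐ ξ ∂η, |g ξ - (a + b * ξ + c * ξ ^ 2)| ≤ δ) :
    |∫ ξ, g ξ ∂η - (a + c * s)| ≤ δ := by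
  have hlin : Integrable (fun ξ => a + b * ξ) η := (integrable_const a).add (h₁.const_mul b)
  have hquad : Integrable (fun ξ => a + b * ξ + c * ξ ^ 2) η := hlin.add (h₂.const_mul c)
  have hrem : Integrable (fun ξ => g ξ - (a + b * ξ + c * ξ ^ 2)) η :=
    .of_bound (hg.sub hquad.aestronglyMeasurable) δ hδ
  have hgint : Integrable g η := (hrem.add hquad).congr (ae_of_all _ fun ξ => by simp)
  calc |∫ ξ, g ξ ∂η - (a + c * s)|
      = ‖∫ ξ, (g ξ - (a + b * ξ + c * ξ ^ 2)) ∂η‖ := by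
        rw [integral_sub hgint hquad, integral_add hlin (h₂.const_mul c),
          integral_add (integrable_const a) (h₁.const_mul b), integral_const_mul,
          integral_const_mul, hmean, hvar]
        simp
    _ ≤ δ := by
        simpa using norm_integral_le_of_norm_le_const
          (hδ.mono fun ξ h => (Real.norm_eq_abs _).trans_le h)

end Moments

section Braking

variable {u V : ℝ} {φ φ' φ'' Δ f : ℝ → ℝ} {L : NNReal} {M : ℝ}

lemma abs_intervalIntegral_comp_sub_sub_taylor_le (huV : u ≤ V)
    (hφ' : ∀ x, HasDerivAt φ (φ' x) x) (hφ'' : ∀ x, HasDerivAt φ' (φ'' x) x)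
    (hlip : LipschitzWith L φ'') (hΔ : ContinuousOn Δ (Set.Icc u V))
    (hM : ∀ v ∈ Set.Icc u V, |Δ v| ≤ M) (hf : IntervalIntegrable f volume u V) (a : ℝ) :
    |(∫ v in u..V, (φ (v - a * Δ v) - φ v) * f v)
      - (-a * (∫ v in u..V, Δ v * φ' v * f v) + a ^ 2 / 2 * ∫ v in u..V, Δ v ^ 2 * φ'' v * f v)|
      ≤ L * M ^ 3 * (∫ v in u..V, |f v|) * |a| ^ 3 := by
  rw [← Set.uIcc_of_le huV] at hΔ
  have hφ : Continuous φ := continuous_iff_continuousAt.2 fun x => (hφ' x).continuousAt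
  have hφ'c : Continuous φ' := continuous_iff_continuousAt.2 fun x => (hφ'' x).continuousAt
  have hdrift : IntervalIntegrable (fun v => -a * (Δ v * φ' v * f v)) volume u V :=
    (hf.continuousOn_mul (hΔ.mul hφ'c.continuousOn)).const_mul (-a)
  have hdiff : IntervalIntegrable (fun v => a ^ 2 / 2 * (Δ v ^ 2 * φ'' v * f v)) volume u V :=
    (hf.continuousOn_mul ((hΔ.pow 2).mul hlip.continuous.continuousOn)).const_mul (a ^ 2 / 2)
  have hjump : IntervalIntegrable (fun v => (φ (v - a * Δ v) - φ v) * f v) volume u V :=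
    hf.continuousOn_mul (by fun_prop)
  calc _ = ‖∫ v in u..V, ((φ (v - a * Δ v) - φ v) * f v
          - (-a * (Δ v * φ' v * f v) + a ^ 2 / 2 * (Δ v ^ 2 * φ'' v * f v)))‖ := by
        rw [intervalIntegral.integral_sub hjump (hdrift.add hdiff),
          intervalIntegral.integral_add hdrift hdiff, intervalIntegral.integral_const_mul,
          intervalIntegral.integral_const_mul, Real.norm_eq_abs]
    _ ≤ ∫ v in u..V, L * M ^ 3 * |a| ^ 3 * |f v| := by
        refine intervalIntegral.norm_integral_le_of_norm_le huV (ae_of_all _ fun v hv => ?_)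
          (hf.abs.const_mul _)
        have hΔv : |a * Δ v| ^ 3 ≤ |a| ^ 3 * M ^ 3 := by
          rw [abs_mul, mul_pow]
          gcongr
          exact hM v (Set.Ioc_subset_Icc_self hv)
        calc ‖(φ (v - a * Δ v) - φ v) * f v
              - (-a * (Δ v * φ' v * f v) + a ^ 2 / 2 * (Δ v ^ 2 * φ'' v * f v))‖
            = |φ (v - a * Δ v) - φ v + a * Δ v * φ' v - (a * Δ v) ^ 2 / 2 * φ'' v| * |f v| := by
              rw [Real.norm_eq_abs, ← abs_mul]
              ring_nf
          _ ≤ L * |a * Δ v| ^ 3 * |f v| := by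
              gcongr
              exact abs_taylor_remainder_two_le hφ' hφ'' hlip v (a * Δ v)
          _ ≤ L * (|a| ^ 3 * M ^ 3) * |f v| := by gcongr
          _ = L * M ^ 3 * |a| ^ 3 * |f v| := by ring
    _ = L * M ^ 3 * (∫ v in u..V, |f v|) * |a| ^ 3 := by
        rw [intervalIntegral.integral_const_mul]
        ring

lemma aestronglyMeasurable_integral_comp_sub_mul_add (huV : u ≤ V) (hφ : Continuous φ)
    (hΔ : ContinuousOn Δ (Set.Icc u V)) (hf : IntervalIntegrable f volume u V) (h : ℝ)
    (η : Measure ℝ) [SFinite η] :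
    AEStronglyMeasurable (fun ξ => ∫ v in u..V, (φ (v - h * Δ v * (h + ξ)) - φ v) * f v) η := by
  simp_rw [intervalIntegral.integral_of_le huV]
  have hΔm : AEStronglyMeasurable Δ (volume.restrict (Set.Ioc u V)) :=
    (hΔ.mono Set.Ioc_subset_Icc_self).aestronglyMeasurable measurableSet_Ioc
  have hjump : Continuous fun p : ℝ × ℝ × ℝ => φ (p.2.2 - h * p.2.1 * (h + p.1)) - φ p.2.2 :=
    by fun_prop
  refine AEStronglyMeasurable.integral_prod_right' (f := fun p : ℝ × ℝ =>
    (φ (p.2 - h * Δ p.2 * (h + p.1)) - φ p.2) * f p.2) ?_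
  refine (hjump.comp_aestronglyMeasurable (measurable_fst.aestronglyMeasurable.prodMk
    ((hΔm.comp_quasiMeasurePreserving Measure.quasiMeasurePreserving_snd).prodMk
      measurable_snd.aestronglyMeasurable))).mul ?_
  exact hf.1.aestronglyMeasurable.comp_quasiMeasurePreserving Measure.quasiMeasurePreserving_snd

lemma abs_integral_braking_sub_le (huV : u ≤ V)
    (hφ' : ∀ x, HasDerivAt φ (φ' x) x) (hφ'' : ∀ x, HasDerivAt φ' (φ'' x) x)
    (hlip : LipschitzWith L φ'') (hΔ : ContinuousOn Δ (Set.Icc u V))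
    (hM : ∀ v ∈ Set.Icc u V, |Δ v| ≤ M) (hf : IntervalIntegrable f volume u V)
    {η : Measure ℝ} [IsProbabilityMeasure η] {C s : ℝ} (hC : ∀ᵐ ξ ∂η, |ξ| ≤ C)
    (hmean : ∫ ξ, ξ ∂η = 0) (hvar : ∫ ξ, ξ ^ 2 ∂η = s) {h : ℝ} (hh : 0 ≤ h) :
    |∫ ξ, (∫ v in u..V, (φ (v - h * Δ v * (h + ξ)) - φ v) * f v) ∂η
      - (-h ^ 2 * (∫ v in u..V, Δ v * φ' v * f v)
        + h ^ 2 * (h ^ 2 + s) / 2 * ∫ v in u..V, Δ v ^ 2 * φ'' v * f v)|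
      ≤ L * M ^ 3 * (∫ v in u..V, |f v|) * (h * (h + C)) ^ 3 := by
  set A := ∫ v in u..V, Δ v * φ' v * f v
  set B := ∫ v in u..V, Δ v ^ 2 * φ'' v * f v
  have hφ : Continuous φ := continuous_iff_continuousAt.2 fun x => (hφ' x).continuousAt
  have hmoments := abs_integral_sub_quadratic_le_s16
    (by simpa using integrable_pow_of_ae_abs_le hC 1) (integrable_pow_of_ae_abs_le hC 2) hmean hvar
    (aestronglyMeasurable_integral_comp_sub_mul_add huV hφ hΔ hf h η)
    (a := -h ^ 2 * A + h ^ 4 / 2 * B) (b := -h * A + h ^ 3 * B) (c := h ^ 2 / 2 * B)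
    (δ := L * M ^ 3 * (∫ v in u..V, |f v|) * (h * (h + C)) ^ 3) ?_
  · convert hmoments using 2
    ring
  filter_upwards [hC] with ξ hξ
  have hjump : ∀ v, v - h * Δ v * (h + ξ) = v - h * (h + ξ) * Δ v := fun v => by ring
  have hquad_eq : -h ^ 2 * A + h ^ 4 / 2 * B + (-h * A + h ^ 3 * B) * ξ + h ^ 2 / 2 * B * ξ ^ 2
      = -(h * (h + ξ)) * A + (h * (h + ξ)) ^ 2 / 2 * B := by ring
  have hsize : |h * (h + ξ)| ^ 3 ≤ (h * (h + C)) ^ 3 := by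
    rw [abs_mul, abs_of_nonneg hh]
    gcongr
    exact (abs_add_le h ξ).trans (by rw [abs_of_nonneg hh]; linarith)
  simp_rw [hjump, hquad_eq]
  refine (abs_intervalIntegral_comp_sub_sub_taylor_le huV hφ' hφ'' hlip hΔ hM hf _).trans ?_
  have hM0 : 0 ≤ M := (abs_nonneg _).trans (hM u ⟨le_rfl, huV⟩)
  have hF0 : 0 ≤ ∫ v in u..V, |f v| :=
    intervalIntegral.integral_nonneg huV fun _ _ => abs_nonneg _
  gcongr

lemma tendsto_braking_integral (huV : u ≤ V)
    (hφ' : ∀ x, HasDerivAt φ (φ' x) x) (hφ'' : ∀ x, HasDerivAt φ' (φ'' x) x)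
    (hlip : LipschitzWith L φ'') (hΔ : ContinuousOn Δ (Set.Icc u V))
    (hf : IntervalIntegrable f volume u V)
    {η : Measure ℝ} [IsProbabilityMeasure η] {C s : ℝ} (hC : ∀ᵐ ξ ∂η, |ξ| ≤ C)
    (hmean : ∫ ξ, ξ ∂η = 0) (hvar : ∫ ξ, ξ ^ 2 ∂η = s) {c : ℝ} (hc : 0 ≤ c) :
    Tendsto (fun ε : ℝ =>
        1 / ε * ∫ ξ, (∫ v in u..V,
          (φ (v - √(ε * c) * Δ v * (√(ε * c) + ξ)) - φ v) * f v) ∂η)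
      (nhdsWithin 0 (Set.Ioi 0))
      (nhds (-c * (∫ v in u..V, Δ v * φ' v * f v)
        + s * c / 2 * ∫ v in u..V, Δ v ^ 2 * φ'' v * f v)) := by
  obtain ⟨M, hM⟩ := isCompact_Icc.exists_bound_of_continuousOn hΔ
  set A := ∫ v in u..V, Δ v * φ' v * f v
  set B := ∫ v in u..V, Δ v ^ 2 * φ'' v * f v
  set K := L * M ^ 3 * ∫ v in u..V, |f v|
  set bound : ℝ → ℝ := fun ε => ε * |c ^ 2 * B / 2| + K * c * √(ε * c) * (√(ε * c) + C) ^ 3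
  have hbound_tendsto : Tendsto bound (nhdsWithin 0 (Set.Ioi 0)) (nhds 0) := by
    have : Continuous bound := by fun_prop
    simpa [bound] using (this.tendsto 0).mono_left nhdsWithin_le_nhds
  refine tendsto_sub_nhds_zero_iff.1 (squeeze_zero_norm' ?_ hbound_tendsto)
  filter_upwards [self_mem_nhdsWithin] with ε (hε : 0 < ε)
  set h := √(ε * c)
  have hh2 : h ^ 2 = ε * c := sq_sqrt (by positivity)
  have hremainder := abs_integral_braking_sub_le huV hφ' hφ'' hlip hΔ
    (fun v hv => (Real.norm_eq_abs _).symm.trans_le (hM v hv)) hf hC hmean hvar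
    (sqrt_nonneg (ε * c))
  rw [hh2] at hremainder
  set I := ∫ ξ, (∫ v in u..V, (φ (v - h * Δ v * (h + ξ)) - φ v) * f v) ∂η
  calc ‖1 / ε * I - (-c * A + s * c / 2 * B)‖
      = |1 / ε * (I - (-(ε * c) * A + ε * c * (ε * c + s) / 2 * B))
          + ε * (c ^ 2 * B / 2)| := by
        rw [Real.norm_eq_abs]
        congr 1
        field_simp
        ring
    _ ≤ 1 / ε * (K * (h * (h + C)) ^ 3) + ε * |c ^ 2 * B / 2| := by
        refine (abs_add_le _ _).trans ?_
        rw [abs_mul, abs_mul, abs_of_pos (by positivity : 0 < 1 / ε), abs_of_pos hε]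
        gcongr
    _ = bound ε := by
        simp only [bound]
        rw [mul_pow, pow_succ h 2, hh2]
        field_simp
        ring

end Braking

theorem grazing_limit_braking_general (Vmax u P σ : ℝ)
    (hu : u ∈ Set.Ico (0 : ℝ) Vmax) (hP : P ∈ Set.Ico (0 : ℝ) 1)
    (η : Measure ℝ) [IsProbabilityMeasure η]
    (hsupp : ∃ C : ℝ, ∀ᵐ ξ ∂η, |ξ| ≤ C)
    (hmean : ∫ ξ, ξ ∂η = 0) (hvar : ∫ ξ, ξ ^ 2 ∂η = σ ^ 2)
    (ΔB : ℝ → ℝ) (hΔB : ContinuousOn ΔB (Set.Icc u Vmax))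
    (f : ℝ → ℝ)
    (hf_int : IntervalIntegrable f volume u Vmax)
    (φ φ' φ'' : ℝ → ℝ) (hφ' : ∀ x, HasDerivAt φ (φ' x) x)
    (hφ'' : ∀ x, HasDerivAt φ' (φ'' x) x)
    (hφ''lip : ∃ L : NNReal, LipschitzWith L φ'') :
    Tendsto (fun ε : ℝ =>
        1 / ε * ∫ ξ, (∫ v in u..Vmax,
          (φ (v - Real.sqrt (ε * (1 - P)) * ΔB v * (Real.sqrt (ε * (1 - P)) + ξ)) - φ v)
            * f v) ∂η)
      (nhdsWithin 0 (Set.Ioi 0))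
      (nhds (-(1 - P) * (∫ v in u..Vmax, ΔB v * φ' v * f v)
        + σ ^ 2 * (1 - P) / 2 * ∫ v in u..Vmax, ΔB v ^ 2 * φ'' v * f v)) := by
  obtain ⟨L, hlip⟩ := hφ''lip
  obtain ⟨C, hC⟩ := hsupp
  exact tendsto_braking_integral hu.2.le hφ' hφ'' hlip hΔB hf_int hC hmean hvar
    (sub_nonneg.2 hP.2.le)

/-- Grazing collision limit of the braking part of the Boltzmann-type traffic model:
as `ε → 0⁺`, the rescaled collision kernel converges to the drift–diffusion terms
`−(1−P) ∫ Δ_B φ′ f + (σ²(1−P)/2) ∫ Δ_B² φ″ f` of the Fokker-Planck model. -/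
theorem grazing_limit_braking (Vmax u P σ : ℝ) (hV : 0 < Vmax)
    (hu : u ∈ Set.Ico (0 : ℝ) Vmax) (hP : P ∈ Set.Ico (0 : ℝ) 1) (hσ : 0 ≤ σ)
    (η : Measure ℝ) [IsProbabilityMeasure η]
    (hsupp : ∃ C : ℝ, ∀ᵐ ξ ∂η, |ξ| ≤ C)
    (hmean : ∫ ξ, ξ ∂η = 0) (hvar : ∫ ξ, ξ ^ 2 ∂η = σ ^ 2)
    (ΔB : ℝ → ℝ) (hΔB : ContinuousOn ΔB (Set.Icc u Vmax))
    (f : ℝ → ℝ) (hf_nonneg : ∀ v ∈ Set.Icc u Vmax, 0 ≤ f v)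
    (hf_int : IntervalIntegrable f volume u Vmax)
    (φ φ' φ'' : ℝ → ℝ) (hφ' : ∀ x, HasDerivAt φ (φ' x) x)
    (hφ'' : ∀ x, HasDerivAt φ' (φ'' x) x) (hφ''cont : Continuous φ'')
    (hφ''lip : ∃ L : NNReal, LipschitzWith L φ'') :
    Tendsto (fun ε : ℝ =>
        1 / ε * ∫ ξ, (∫ v in u..Vmax,
          (φ (v - Real.sqrt (ε * (1 - P)) * ΔB v * (Real.sqrt (ε * (1 - P)) + ξ)) - φ v)
            * f v) ∂η)
      (nhdsWithin 0 (Set.Ioi 0))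
      (nhds (-(1 - P) * (∫ v in u..Vmax, ΔB v * φ' v * f v)
        + σ ^ 2 * (1 - P) / 2 * ∫ v in u..Vmax, ΔB v ^ 2 * φ'' v * f v)) :=
  grazing_limit_braking_general Vmax u P σ hu hP η hsupp hmean hvar ΔB hΔB f hf_int φ φ' φ'' hφ'
    hφ'' hφ''lip
end

section
/- Let V_max > 0, u ∈ (0,V_max), ρ > 0, P ∈ [0,1], σ ≥ 0, and let μ = ρ·δ_u be ρ times the Dirac measure at u on [0,V_max]. Then for every smooth function φ : ℝ → ℝ, P·∫ χ_{[0,u]}(v)·(u − v)·φ′(v) dμ(v) − (1 − P)·∫ χ_{[u,V_max]}(v)·(v − u)·φ′(v) dμ(v) + (σ²P/2)·∫ χ_{[0,u]}(v)·(u − v)²·φ″(v) dμ(v) + (σ²(1 − P)/2)·∫ χ_{[u,V_max]}(v)·(v − u)²·φ″(v) dμ(v) = 0. -/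
open MeasureTheory

/-- The measure `ρ·δ_u` (synchronized traffic flow at speed `u`) is a weak stationary
solution of the Fokker-Planck traffic model with desired speeds `V_A = V_B = u`:
the right-hand side of the weak formulation vanishes for every smooth test function. -/
theorem synchronized_flow_stationary (Vmax u ρ P σ : ℝ) (hV : 0 < Vmax)
    (hu : u ∈ Set.Ioo (0 : ℝ) Vmax) (hρ : 0 < ρ) (hP : P ∈ Set.Icc (0 : ℝ) 1) (hσ : 0 ≤ σ) :
    ∀ φ : ℝ → ℝ, ContDiff ℝ (⊤ : ℕ∞) φ →
      P * (∫ v, Set.indicator (Set.Icc (0 : ℝ) u) (fun v => (u - v) * deriv φ v) v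
            ∂(ENNReal.ofReal ρ • Measure.dirac u))
        - (1 - P) * (∫ v, Set.indicator (Set.Icc u Vmax) (fun v => (v - u) * deriv φ v) v
            ∂(ENNReal.ofReal ρ • Measure.dirac u))
        + σ ^ 2 * P / 2
          * (∫ v, Set.indicator (Set.Icc (0 : ℝ) u)
              (fun v => (u - v) ^ 2 * deriv (deriv φ) v) v
            ∂(ENNReal.ofReal ρ • Measure.dirac u))
        + σ ^ 2 * (1 - P) / 2
          * (∫ v, Set.indicator (Set.Icc u Vmax)
              (fun v => (v - u) ^ 2 * deriv (deriv φ) v) v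
            ∂(ENNReal.ofReal ρ • Measure.dirac u)) = 0 := by
  intro φ hφ
  have h1 : u ∈ Set.Icc (0 : ℝ) u := ⟨hu.1.le, le_refl u⟩
  have h2 : u ∈ Set.Icc u Vmax := ⟨le_refl u, hu.2.le⟩
  simp [integral_smul_measure, integral_dirac, Set.indicator_of_mem h1,
    Set.indicator_of_mem h2]
end
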